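/- Consider the closed-loop system: x̃ : ℝ → ℝⁿ and x̃_c : ℝ → ℝ^{nG} are differentiable and satisfy x̃'(t) = (J − R̃(x̃(t)))·Q·x̃(t) + g·ũ(t) and x̃_c'(t) = −k_I·𝓛·ũ_c(t), where ỹ(t) = gᵀQx̃(t), ỹ_c(t) = −𝓛·x̃_c(t), ũ(t) = −r·ỹ(t) − w⁻¹·ỹ_c(t), ũ_c(t) = (w⁻¹)ᵀ·ỹ(t), with w invertible and 𝓛 symmetric. Suppose that for every t the matrix R̃(x̃(t)) + g·r·gᵀ has positive-definite quadratic form (vᵀ(R̃(x̃(t)) + g r gᵀ)v > 0 for all v ≠ 0), and that the total storage H_t(t) = ½x̃(t)ᵀQx̃(t) + ½x̃_c(t)ᵀk_I⁻¹x̃_c(t) is constant in t. Then x̃(t) = 0 for all t, x̃_c is constant, and 𝓛·x̃_c(t) = 0 for all t. -/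

import Mathlib

/-!
Differentiating the total storage along the closed loop, the skew part `J` contributes nothing
and the two cross terms coupling the electrical state with the controller state cancel because
`𝓛` is symmetric, so the storage decays at rate `ỹᵀ (R̃ + g r gᵀ) ỹ` with `ỹ = Q x̃`. Constant
storage forces `Q x̃ ≡ 0`, hence `x̃ ≡ 0`. Then `x̃_c' ≡ 0`, and the `x̃`-equation reduces to
`0 = g w⁻¹ 𝓛 x̃_c`, which gives `𝓛 x̃_c = 0` since `g` and `w⁻¹` are injective.
-/

open Matrix

/-- Index type of the microgrid state: generator currents, line currents, bus charges. -/
abbrev BIdx (nG nE nN : ℕ) := Fin nG ⊕ (Fin nE ⊕ Fin nN)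

/-- The input matrix `g = [I; 0; 0]`. -/
noncomputable def gMat (nG nE nN : ℕ) : Matrix (BIdx nG nE nN) (Fin nG) ℝ :=
  Matrix.of fun i j =>
    match i with
    | Sum.inl i' => if i' = j then (1 : ℝ) else 0
    | Sum.inr _ => 0

section Calculus

variable {m n : Type*} [Fintype m] [Fintype n] {f g : ℝ → n → ℝ} {f' g' : n → ℝ} {t : ℝ}

theorem HasDerivAt.dotProduct (hf : HasDerivAt f f' t) (hg : HasDerivAt g g' t) :
    HasDerivAt (fun s => f s ⬝ᵥ g s) (f' ⬝ᵥ g t + f t ⬝ᵥ g') t := by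
  have hsum := HasDerivAt.fun_sum (u := Finset.univ)
    fun i _ => (hasDerivAt_pi.1 hf i).fun_mul (hasDerivAt_pi.1 hg i)
  simpa only [_root_.dotProduct, Finset.sum_add_distrib] using hsum

theorem HasDerivAt.mulVec (M : Matrix m n ℝ) (hf : HasDerivAt f f' t) :
    HasDerivAt (fun s => M *ᵥ f s) (M *ᵥ f') t :=
  (mulVecLin M).toContinuousLinearMap.hasFDerivAt.comp_hasDerivAt t hf

theorem HasDerivAt.half_dotProduct_mulVec_self {M : Matrix n n ℝ} (hM : M.IsSymm)
    (hf : HasDerivAt f f' t) :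
    HasDerivAt (fun s => 1 / 2 * (f s ⬝ᵥ (M *ᵥ f s))) ((M *ᵥ f t) ⬝ᵥ f') t := by
  refine ((hf.dotProduct (hf.mulVec M)).const_mul (1 / 2 : ℝ)).congr_deriv ?_
  rw [dotProduct_comm f', dotProduct_mulVec (f t), ← mulVec_transpose, hM.eq]
  ring

end Calculus

section Algebra

variable {ι κ R : Type*} [Fintype ι] [Fintype κ] [CommRing R]

theorem dotProduct_mulVec_self_eq_zero_of_transpose_eq_neg [IsAddTorsionFree R]
    {J : Matrix ι ι R} (hJ : Jᵀ = -J) (v : ι → R) : v ⬝ᵥ (J *ᵥ v) = 0 := by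
  refine self_eq_neg.mp ?_
  calc v ⬝ᵥ (J *ᵥ v) = v ⬝ᵥ (Jᵀ *ᵥ v) := by
        rw [dotProduct_mulVec, ← mulVec_transpose, dotProduct_comm]
    _ = -(v ⬝ᵥ (J *ᵥ v)) := by rw [hJ, neg_mulVec, dotProduct_neg]

/-- The storage rate `(Q x̃)ᵀ x̃' + (K⁻¹ x̃_c)ᵀ x̃_c'` of the closed loop, with `y = Q x̃` and `W`
in the role of `w⁻¹`. -/
theorem closedLoop_storage_rate [IsAddTorsionFree R] [DecidableEq κ]
    {J : Matrix ι ι R} (hJ : Jᵀ = -J) {L : Matrix κ κ R} (hL : L.IsSymm)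
    {K : Matrix κ κ R} (hKsymm : K.IsSymm) (hK : IsUnit K.det)
    (D : Matrix ι ι R) (g : Matrix ι κ R) (r W : Matrix κ κ R) (y : ι → R) (xc : κ → R) :
    y ⬝ᵥ ((J - D) *ᵥ y + g *ᵥ (-(r *ᵥ (gᵀ *ᵥ y)) - W *ᵥ (-(L *ᵥ xc)))) +
        (K⁻¹ *ᵥ xc) ⬝ᵥ -((K * L) *ᵥ (Wᵀ *ᵥ (gᵀ *ᵥ y))) =
      -(y ⬝ᵥ ((D + g * r * gᵀ) *ᵥ y)) := by
  have port : ∀ v, y ⬝ᵥ (g *ᵥ v) = (gᵀ *ᵥ y) ⬝ᵥ v := fun v => by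
    rw [dotProduct_mulVec, mulVec_transpose]
  have cross : xc ⬝ᵥ (L *ᵥ (Wᵀ *ᵥ (gᵀ *ᵥ y))) = (gᵀ *ᵥ y) ⬝ᵥ (W *ᵥ (L *ᵥ xc)) := by
    rw [dotProduct_mulVec, ← mulVec_transpose, hL.eq, dotProduct_mulVec, vecMul_transpose,
      dotProduct_comm]
  have damping : y ⬝ᵥ ((g * r * gᵀ) *ᵥ y) = (gᵀ *ᵥ y) ⬝ᵥ (r *ᵥ (gᵀ *ᵥ y)) := by
    rw [← mulVec_mulVec, ← mulVec_mulVec, port]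
  have feedback : (K⁻¹ *ᵥ xc) ⬝ᵥ -((K * L) *ᵥ (Wᵀ *ᵥ (gᵀ *ᵥ y))) =
      xc ⬝ᵥ -(L *ᵥ (Wᵀ *ᵥ (gᵀ *ᵥ y))) := by
    rw [← vecMul_transpose, ← dotProduct_mulVec, hKsymm.inv.eq, mulVec_neg, mulVec_mulVec,
      nonsing_inv_mul_cancel_left _ _ hK]
  rw [feedback]
  simp only [sub_mulVec, add_mulVec, mulVec_neg, sub_neg_eq_add, mulVec_add, dotProduct_add,
    dotProduct_sub, dotProduct_neg, port, cross, damping,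
    dotProduct_mulVec_self_eq_zero_of_transpose_eq_neg hJ]
  ring

end Algebra

theorem gMat_transpose_mul_gMat (nG nE nN : ℕ) : (gMat nG nE nN)ᵀ * gMat nG nE nN = 1 := by
  ext i j
  simp [gMat, mul_apply, one_apply, eq_comm]

theorem gMat_mulVec_injective (nG nE nN : ℕ) : Function.Injective (gMat nG nE nN *ᵥ ·) :=
  fun u v huv => by
    simpa [mulVec_mulVec, gMat_transpose_mul_gMat] using congrArg ((gMat nG nE nN)ᵀ *ᵥ ·) huv

theorem lasalle_invariant_set_general
    (nG nE nN : ℕ)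
    (Rt : (BIdx nG nE nN → ℝ) → Matrix (BIdx nG nE nN) (BIdx nG nE nN) ℝ)
    (Q : Matrix (BIdx nG nE nN) (BIdx nG nE nN) ℝ) (hQsymm : Q.IsSymm) (hQpd : Q.PosDef)
    (J : Matrix (BIdx nG nE nN) (BIdx nG nE nN) ℝ) (hJ : Jᵀ = -J)
    (kd : Fin nG → ℝ) (hkd : ∀ i, 0 < kd i)
    (L : Matrix (Fin nG) (Fin nG) ℝ) (hL : L.IsSymm)
    (r w : Matrix (Fin nG) (Fin nG) ℝ) (hw : IsUnit w.det)
    (xt : ℝ → (BIdx nG nE nN → ℝ)) (xc : ℝ → (Fin nG → ℝ))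
    (hxdiff : ∀ t : ℝ, HasDerivAt xt
      ((J - Rt (xt t)) *ᵥ (Q *ᵥ xt t) +
        gMat nG nE nN *ᵥ
          (-(r *ᵥ ((gMat nG nE nN)ᵀ *ᵥ (Q *ᵥ xt t))) - w⁻¹ *ᵥ (-(L *ᵥ xc t)))) t)
    (hxcdiff : ∀ t : ℝ, HasDerivAt xc
      (-((Matrix.diagonal kd * L) *ᵥ ((w⁻¹)ᵀ *ᵥ ((gMat nG nE nN)ᵀ *ᵥ (Q *ᵥ xt t))))) t)
    (hpd : ∀ t : ℝ, ∀ v : BIdx nG nE nN → ℝ, v ≠ 0 →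
      0 < v ⬝ᵥ ((Rt (xt t) + gMat nG nE nN * r * (gMat nG nE nN)ᵀ) *ᵥ v))
    (hconst : ∀ t s : ℝ,
      (1 / 2 : ℝ) * ((xt t) ⬝ᵥ (Q *ᵥ xt t)) +
        (1 / 2 : ℝ) * ((xc t) ⬝ᵥ ((Matrix.diagonal kd)⁻¹ *ᵥ xc t)) =
      (1 / 2 : ℝ) * ((xt s) ⬝ᵥ (Q *ᵥ xt s)) +
        (1 / 2 : ℝ) * ((xc s) ⬝ᵥ ((Matrix.diagonal kd)⁻¹ *ᵥ xc s))) :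
    (∀ t : ℝ, xt t = 0) ∧ (∀ t s : ℝ, xc t = xc s) ∧ (∀ t : ℝ, L *ᵥ xc t = 0) := by
  have hK : IsUnit (diagonal kd).det :=
    (isUnit_iff_isUnit_det _).mp <| isUnit_diagonal.mpr <| Pi.isUnit_iff.mpr
      fun i => (hkd i).ne'.isUnit
  have hQx : ∀ t, Q *ᵥ xt t = 0 := by
    intro t
    have hrate := ((hxdiff t).half_dotProduct_mulVec_self hQsymm).add
      ((hxcdiff t).half_dotProduct_mulVec_self (isSymm_diagonal kd).inv)
    have hzero := hrate.unique <| (hasDerivAt_const t _).congr_of_eventuallyEq <|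
      Filter.Eventually.of_forall fun s => hconst s 0
    rw [closedLoop_storage_rate hJ hL (isSymm_diagonal kd) hK] at hzero
    by_contra hne
    exact (hpd t _ hne).ne' (neg_eq_zero.mp hzero)
  have hxt : ∀ t, xt t = 0 := fun t =>
    mulVec_injective_of_isUnit hQpd.isUnit (by rw [hQx t, mulVec_zero])
  refine ⟨hxt, ?_, fun t => ?_⟩
  · have hxc' : ∀ t, HasDerivAt xc 0 t := fun t => by
      simpa [hQx t] using hxcdiff t
    exact is_const_of_deriv_eq_zero (fun t => (hxc' t).differentiableAt) fun t => (hxc' t).deriv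
  · have hxt' : HasDerivAt xt 0 t :=
      (hasDerivAt_const t 0).congr_of_eventuallyEq (Filter.Eventually.of_forall hxt)
    have h := hxt'.unique (hxdiff t)
    simp only [hQx t, mulVec_zero, neg_zero, zero_sub, mulVec_neg, neg_neg, zero_add] at h
    have hwinv : IsUnit w⁻¹ := isUnit_nonsing_inv_iff.mpr ((isUnit_iff_isUnit_det w).mpr hw)
    refine mulVec_injective_of_isUnit hwinv (gMat_mulVec_injective nG nE nN ?_)
    simpa using h.symm

/-- **LaSalle invariant-set step of Proposition 2.** Along any complete
closed-loop trajectory on which the total storage is constant and the dissipation matrix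
`R̃(x̃(t)) + g r gᵀ` has positive-definite quadratic form, the electrical state vanishes
identically, the controller state is constant and lies in the kernel of `𝓛`. -/
theorem lasalle_invariant_set
    (nG nE nN : ℕ) (hnG : 0 < nG) (hnE : 0 < nE) (hnN : 0 < nN)
    (Rt : (BIdx nG nE nN → ℝ) → Matrix (BIdx nG nE nN) (BIdx nG nE nN) ℝ)
    (Q : Matrix (BIdx nG nE nN) (BIdx nG nE nN) ℝ) (hQsymm : Q.IsSymm) (hQpd : Q.PosDef)
    (J : Matrix (BIdx nG nE nN) (BIdx nG nE nN) ℝ) (hJ : Jᵀ = -J)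
    (kd : Fin nG → ℝ) (hkd : ∀ i, 0 < kd i)
    (L : Matrix (Fin nG) (Fin nG) ℝ) (hL : L.IsSymm)
    (r w : Matrix (Fin nG) (Fin nG) ℝ) (hw : IsUnit w.det)
    (xt : ℝ → (BIdx nG nE nN → ℝ)) (xc : ℝ → (Fin nG → ℝ))
    (hxdiff : ∀ t : ℝ, HasDerivAt xt
      ((J - Rt (xt t)) *ᵥ (Q *ᵥ xt t) +
        gMat nG nE nN *ᵥ
          (-(r *ᵥ ((gMat nG nE nN)ᵀ *ᵥ (Q *ᵥ xt t))) - w⁻¹ *ᵥ (-(L *ᵥ xc t)))) t)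
    (hxcdiff : ∀ t : ℝ, HasDerivAt xc
      (-((Matrix.diagonal kd * L) *ᵥ ((w⁻¹)ᵀ *ᵥ ((gMat nG nE nN)ᵀ *ᵥ (Q *ᵥ xt t))))) t)
    (hpd : ∀ t : ℝ, ∀ v : BIdx nG nE nN → ℝ, v ≠ 0 →
      0 < v ⬝ᵥ ((Rt (xt t) + gMat nG nE nN * r * (gMat nG nE nN)ᵀ) *ᵥ v))
    (hconst : ∀ t s : ℝ,
      (1 / 2 : ℝ) * ((xt t) ⬝ᵥ (Q *ᵥ xt t)) +
        (1 / 2 : ℝ) * ((xc t) ⬝ᵥ ((Matrix.diagonal kd)⁻¹ *ᵥ xc t)) =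
      (1 / 2 : ℝ) * ((xt s) ⬝ᵥ (Q *ᵥ xt s)) +
        (1 / 2 : ℝ) * ((xc s) ⬝ᵥ ((Matrix.diagonal kd)⁻¹ *ᵥ xc s))) :
    (∀ t : ℝ, xt t = 0) ∧ (∀ t s : ℝ, xc t = xc s) ∧ (∀ t : ℝ, L *ᵥ xc t = 0) :=
  lasalle_invariant_set_general nG nE nN Rt Q hQsymm hQpd J hJ kd hkd L hL r w hw xt xc hxdiff
    hxcdiff hpd hconst
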